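/- For |q| < 1 and nonnegative integer n, H_n(aD_q){1/((bx;q)_∞ (cx;q)_∞)} = ((q^n ac;q)_∞ / ((bx;q)_∞ (cx;q)_∞ (ac;q)_∞)) · Σ_{m=0}^∞ ((q^n;q)_m (cx;q)_m / ((q;q)_m (q^n ac;q)_m)) (ab)^m. -/

import Mathlib

open Finset Filter

/-- finite q-Pochhammer symbol `(a;q)_n` -/
noncomputable def qPoch (q a : ℂ) (n : ℕ) : ℂ := ∏ j ∈ Finset.range n, (1 - a * q ^ j)

/-- infinite q-Pochhammer symbol `(a;q)_∞` -/
noncomputable def qPochInf (q a : ℂ) : ℂ := ∏' j : ℕ, (1 - a * q ^ j)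

/-- Gaussian binomial coefficient `[n choose k]_q` -/
noncomputable def qbinom (q : ℂ) (n k : ℕ) : ℂ :=
  qPoch q q n / (qPoch q q k * qPoch q q (n - k))

/-- the q-differential operator `D_q` -/
noncomputable def Dq (q : ℂ) (f : ℂ → ℂ) : ℂ → ℂ := fun x => (f x - f (q * x)) / x

/-- homogeneous Hahn polynomial `Φ_m^{(α)}(b,x|q)` -/
noncomputable def hahn (q α b x : ℂ) (m : ℕ) : ℂ :=
  ∑ k ∈ Finset.range (m + 1), qbinom q m k * qPoch q α k * b ^ k * x ^ (m - k)

/-!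
Write `P(t) = (bt;q)_∞ (ct;q)_∞` and `Φ_k(x) = Σ_j [k choose j]_q (cx;q)_j b^j c^(k-j)`, which is
`hahn q (c * x) b c k`. Since `P(x) = (1 - bx)(1 - cx) P(qx)`, one application of `D_q` sends `Φ/P`
to `(Φ(x) - (1 - bx)(1 - cx) Φ(qx)) / (x P(x))`, and the q-Pascal rule shows that this numerator is
`x Φ_{k+1}(x)`; hence `D_q^k (1/P) = Φ_k/P`. Expanding `Φ_k` turns the operator series into an
absolutely convergent double series in `(ab)^j (ac)^m`. Summing over `m` first with the q-binomial
theorem `Σ_m (q^N;q)_m/(q;q)_m z^m = 1/(z;q)_N` at `N = n + j`, `z = ac`, and splitting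
`(ac;q)_(n+j) = (ac;q)_n (q^n ac;q)_j` and `(ac;q)_∞ = (ac;q)_n (q^n ac;q)_∞` leaves the right-hand
side.
-/

open Topology

@[simp]
lemma qPoch_zero (q a : ℂ) : qPoch q a 0 = 1 :=
  prod_range_zero _

lemma qPoch_succ (q a : ℂ) (n : ℕ) : qPoch q a (n + 1) = qPoch q a n * (1 - a * q ^ n) :=
  prod_range_succ _ _

lemma qPoch_add (q a : ℂ) (m n : ℕ) :
    qPoch q a (m + n) = qPoch q a m * qPoch q (a * q ^ m) n := by
  simp only [qPoch, prod_range_add, pow_add, mul_assoc]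

lemma qPoch_succ' (q a : ℂ) (n : ℕ) : qPoch q a (n + 1) = (1 - a) * qPoch q (a * q) n := by
  rw [add_comm, qPoch_add]
  simp [qPoch]

lemma qbinom_zero_right (q : ℂ) {k : ℕ} (hk : qPoch q q k ≠ 0) : qbinom q k 0 = 1 := by
  rw [qbinom, Nat.sub_zero, qPoch_zero, one_mul, div_self hk]

lemma qbinom_self (q : ℂ) {k : ℕ} (hk : qPoch q q k ≠ 0) : qbinom q k k = 1 := by
  rw [qbinom, Nat.sub_self, qPoch_zero, mul_one, div_self hk]

lemma hahn_zero (q α b c : ℂ) : hahn q α b c 0 = 1 := by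
  simp [hahn, qbinom]

lemma exists_norm_le_of_tendsto {E : Type*} [SeminormedAddCommGroup E] {u : ℕ → E} {l : E}
    (hu : Tendsto u atTop (𝓝 l)) : ∃ C, ∀ n, ‖u n‖ ≤ C :=
  (Metric.isBounded_range_of_tendsto u hu).exists_norm_le.imp fun _ hC n => hC _ ⟨n, rfl⟩

lemma one_sub_ne_zero_of_norm_lt_one {R : Type*} [NormedRing R] [NormOneClass R] {w : R}
    (hw : ‖w‖ < 1) : 1 - w ≠ 0 := by
  rw [sub_ne_zero]
  rintro rfl
  simp at hw

lemma tsum_sum_antidiagonal_eq_tsum_prod {M : Type*} [AddCommMonoid M] [TopologicalSpace M]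
    [ContinuousAdd M] [T3Space M] {F : ℕ × ℕ → M} (hF : Summable F) :
    ∑' k : ℕ, ∑ p ∈ antidiagonal k, F p = ∑' p : ℕ × ℕ, F p := by
  rw [← HasAntidiagonal.sigmaAntidiagonalEquivProd.tsum_eq F,
    Summable.tsum_sigma' (f := fun c => F (HasAntidiagonal.sigmaAntidiagonalEquivProd c))
      (fun k => (hasSum_fintype _).summable)
      (HasAntidiagonal.sigmaAntidiagonalEquivProd.summable_iff.2 hF)]
  exact tsum_congr fun k => (sum_finset_coe F _).symm.trans (tsum_fintype _).symm

section

variable {q : ℂ}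

lemma norm_mul_pow_lt_one {z : ℂ} (hq : ‖q‖ ≤ 1) (hz : ‖z‖ < 1) (n : ℕ) :
    ‖z * q ^ n‖ < 1 := by
  rw [norm_mul, norm_pow]
  exact (mul_le_of_le_one_right (norm_nonneg z) (pow_le_one₀ (norm_nonneg q) hq)).trans_lt hz

lemma qPoch_ne_zero {z : ℂ} (hq : ‖q‖ ≤ 1) (hz : ‖z‖ < 1) (n : ℕ) : qPoch q z n ≠ 0 :=
  prod_ne_zero_iff.2 fun j _ => one_sub_ne_zero_of_norm_lt_one (norm_mul_pow_lt_one hq hz j)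

lemma summable_norm_neg_mul_pow (hq : ‖q‖ < 1) (z : ℂ) :
    Summable fun n : ℕ => ‖-(z * q ^ n)‖ := by
  simpa [norm_mul, norm_pow] using (summable_geometric_of_lt_one (norm_nonneg q) hq).mul_left ‖z‖

lemma multipliable_one_sub_mul_pow (hq : ‖q‖ < 1) (z : ℂ) :
    Multipliable fun n : ℕ => 1 - z * q ^ n := by
  simpa [sub_eq_add_neg] using multipliable_one_add_of_summable (summable_norm_neg_mul_pow hq z)

lemma qPochInf_ne_zero {z : ℂ} (hq : ‖q‖ < 1) (hz : ‖z‖ < 1) : qPochInf q z ≠ 0 := by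
  have hfactor (n : ℕ) : 1 + -(z * q ^ n) ≠ 0 := by
    simpa [sub_eq_add_neg] using one_sub_ne_zero_of_norm_lt_one (norm_mul_pow_lt_one hq.le hz n)
  simpa [qPochInf, sub_eq_add_neg] using
    tprod_one_add_ne_zero_of_summable hfactor (summable_norm_neg_mul_pow hq z)

lemma qPoch_mul_qPochInf (hq : ‖q‖ < 1) (z : ℂ) (n : ℕ) :
    qPoch q z n * qPochInf q (z * q ^ n) = qPochInf q z := by
  have htail : (fun j => 1 - z * q ^ (j + n)) = fun j => 1 - z * q ^ n * q ^ j := by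
    ext j
    ring
  have h := Multipliable.prod_mul_tprod_nat_mul' (f := fun j => 1 - z * q ^ j) (k := n)
    (htail ▸ multipliable_one_sub_mul_pow hq (z * q ^ n))
  rwa [htail] at h

lemma one_sub_mul_qPochInf (hq : ‖q‖ < 1) (z : ℂ) :
    (1 - z) * qPochInf q (z * q) = qPochInf q z := by
  simpa [qPoch] using qPoch_mul_qPochInf hq z 1

lemma tendsto_qPoch (hq : ‖q‖ < 1) (z : ℂ) :
    Tendsto (qPoch q z) atTop (𝓝 (qPochInf q z)) :=
  (multipliable_one_sub_mul_pow hq z).tendsto_prod_tprod_nat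

lemma exists_norm_qPoch_le (hq : ‖q‖ < 1) (z : ℂ) : ∃ C, ∀ n, ‖qPoch q z n‖ ≤ C :=
  exists_norm_le_of_tendsto (tendsto_qPoch hq z)

lemma exists_norm_inv_qPoch_le {z : ℂ} (hq : ‖q‖ < 1) (hz : ‖z‖ < 1) :
    ∃ C, ∀ n, ‖(qPoch q z n)⁻¹‖ ≤ C :=
  exists_norm_le_of_tendsto ((tendsto_qPoch hq z).inv₀ (qPochInf_ne_zero hq hz))

/-- At `j = k` this fails: `qbinom q k (k + 1)` is not `0`, as `k - (k + 1)` truncates to `0`. -/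
lemma qbinom_succ_succ (hq : ‖q‖ < 1) {j k : ℕ} (h : j < k) :
    qbinom q (k + 1) (j + 1) = q ^ (j + 1) * qbinom q k (j + 1) + qbinom q k j := by
  obtain ⟨m, rfl⟩ : ∃ m, k = j + 1 + m := ⟨k - (j + 1), by omega⟩
  rw [qbinom, qbinom, qbinom, show j + 1 + m + 1 - (j + 1) = m + 1 by omega,
    show j + 1 + m - (j + 1) = m by omega, show j + 1 + m - j = m + 1 by omega,
    qPoch_succ q q (j + 1 + m), qPoch_succ q q m, qPoch_succ q q j]
  have := qPoch_ne_zero hq.le hq j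
  have := qPoch_ne_zero hq.le hq m
  have := one_sub_ne_zero_of_norm_lt_one (norm_mul_pow_lt_one hq.le hq j)
  have := one_sub_ne_zero_of_norm_lt_one (norm_mul_pow_lt_one hq.le hq m)
  field_simp
  ring

lemma sum_qbinom_succ (hq : ‖q‖ < 1) (g : ℕ → ℕ → ℂ) (k : ℕ) :
    ∑ j ∈ range (k + 1 + 1), qbinom q (k + 1) j * g j (k + 1 - j)
      = ∑ j ∈ range (k + 1), qbinom q k j * (q ^ j * g j (k + 1 - j) + g (j + 1) (k - j)) := by
  have hk := qPoch_ne_zero hq.le hq k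
  have hk1 := qPoch_ne_zero hq.le hq (k + 1)
  have hpascal : ∀ j ∈ range k, qbinom q (k + 1) (j + 1) * g (j + 1) (k + 1 - (j + 1))
      = qbinom q k (j + 1) * (q ^ (j + 1) * g (j + 1) (k + 1 - (j + 1)))
        + qbinom q k j * g (j + 1) (k - j) := by
    intro j hj
    rw [qbinom_succ_succ hq (mem_range.1 hj), show k + 1 - (j + 1) = k - j by omega]
    ring
  simp only [mul_add, sum_add_distrib]
  rw [sum_range_succ', sum_range_succ, sum_congr rfl hpascal, sum_add_distrib,
    sum_range_succ' (fun j => qbinom q k j * (q ^ j * g j (k + 1 - j))),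
    sum_range_succ (fun j => qbinom q k j * g (j + 1) (k - j)),
    qbinom_zero_right q hk, qbinom_zero_right q hk1, qbinom_self q hk, qbinom_self q hk1]
  simp only [Nat.sub_self, Nat.sub_zero]
  ring

lemma hahn_sub_mul_hahn (hq : ‖q‖ < 1) (b c x : ℂ) (k : ℕ) :
    hahn q (c * x) b c k - (1 - b * x) * (1 - c * x) * hahn q (c * (q * x)) b c k
      = x * hahn q (c * x) b c (k + 1) := by
  have hsum := sum_qbinom_succ hq (fun j i => qPoch q (c * x) j * (b ^ j * c ^ i)) k
  simp only [← mul_assoc] at hsum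
  rw [hahn, hahn, hahn, hsum, mul_sum, mul_sum, ← sum_sub_distrib]
  refine sum_congr rfl fun j hj => ?_
  have hshift :
      (1 - c * x) * qPoch q (c * (q * x)) j = qPoch q (c * x) j * (1 - c * x * q ^ j) := by
    rw [← qPoch_succ, qPoch_succ', mul_right_comm, mul_assoc]
  rw [show k + 1 - j = k - j + 1 by have := mem_range.1 hj; omega, qPoch_succ]
  linear_combination (-(1 - b * x) * qbinom q k j * b ^ j * c ^ (k - j)) * hshift

lemma Dq_div_qPochInf_mul (hq : ‖q‖ < 1) {b c x : ℂ} (hbx : ‖b * x‖ < 1)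
    (hcx : ‖c * x‖ < 1) (f : ℂ → ℂ) :
    Dq q (fun t => f t / (qPochInf q (b * t) * qPochInf q (c * t))) x
      = (f x - (1 - b * x) * (1 - c * x) * f (q * x)) / x
          / (qPochInf q (b * x) * qPochInf q (c * x)) := by
  have hqx (z : ℂ) : z * (q * x) = z * x * q ^ 1 := by ring
  have hb : qPochInf q (b * x) = (1 - b * x) * qPochInf q (b * (q * x)) := by
    rw [hqx, pow_one, one_sub_mul_qPochInf hq]
  have hc : qPochInf q (c * x) = (1 - c * x) * qPochInf q (c * (q * x)) := by
    rw [hqx, pow_one, one_sub_mul_qPochInf hq]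
  have := qPochInf_ne_zero hq (hqx b ▸ norm_mul_pow_lt_one hq.le hbx 1)
  have := qPochInf_ne_zero hq (hqx c ▸ norm_mul_pow_lt_one hq.le hcx 1)
  have := one_sub_ne_zero_of_norm_lt_one hbx
  have := one_sub_ne_zero_of_norm_lt_one hcx
  simp only [Dq]
  rw [hb, hc]
  generalize qPochInf q (b * (q * x)) = B at *
  generalize qPochInf q (c * (q * x)) = C at *
  generalize 1 - b * x = β at *
  generalize 1 - c * x = γ at *
  field_simp

lemma iterate_Dq_inv_qPochInf_mul (hq0 : q ≠ 0) (hq : ‖q‖ < 1) {b c x : ℂ} (hx : x ≠ 0)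
    (hbx : ‖b * x‖ < 1) (hcx : ‖c * x‖ < 1) (k : ℕ) :
    (Dq q)^[k] (fun t => 1 / (qPochInf q (b * t) * qPochInf q (c * t))) x
      = hahn q (c * x) b c k / (qPochInf q (b * x) * qPochInf q (c * x)) := by
  induction k generalizing x with
  | zero => rw [Function.iterate_zero_apply, hahn_zero]
  | succ k ih =>
    have hqx (z : ℂ) (hz : ‖z * x‖ < 1) : ‖z * (q * x)‖ < 1 := by
      simpa [mul_left_comm, mul_comm] using norm_mul_pow_lt_one hq.le hz 1
    calc (Dq q)^[k + 1] (fun t => 1 / (qPochInf q (b * t) * qPochInf q (c * t))) x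
        = Dq q (fun t => hahn q (c * t) b c k / (qPochInf q (b * t) * qPochInf q (c * t))) x := by
          rw [Function.iterate_succ_apply']
          simp only [Dq, ih hx hbx hcx, ih (mul_ne_zero hq0 hx) (hqx b hbx) (hqx c hcx)]
      _ = hahn q (c * x) b c (k + 1) / (qPochInf q (b * x) * qPochInf q (c * x)) := by
          rw [Dq_div_qPochInf_mul hq hbx hcx, hahn_sub_mul_hahn hq, mul_div_cancel_left₀ _ hx]

lemma sum_range_qPoch_div_qPoch_mul_pow (hq : ‖q‖ < 1) (N k : ℕ) :
    ∑ j ∈ range (k + 1), qPoch q (q ^ N) j / qPoch q q j * (q ^ N) ^ (k - j)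
      = qPoch q (q ^ (N + 1)) k / qPoch q q k := by
  induction k with
  | zero => simp
  | succ k ih =>
    have hshift : ∀ j ∈ range (k + 1), qPoch q (q ^ N) j / qPoch q q j * (q ^ N) ^ (k + 1 - j)
        = qPoch q (q ^ N) j / qPoch q q j * (q ^ N) ^ (k - j) * q ^ N := by
      intro j hj
      rw [show k + 1 - j = k - j + 1 by have := mem_range.1 hj; omega, pow_succ, mul_assoc]
    rw [sum_range_succ, sum_congr rfl hshift, ← sum_mul, ih, Nat.sub_self, pow_zero, mul_one,
      qPoch_succ q q k, qPoch_succ q (q ^ (N + 1)) k, qPoch_succ' q (q ^ N) k, ← pow_succ]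
    have := qPoch_ne_zero hq.le hq k
    have := one_sub_ne_zero_of_norm_lt_one (norm_mul_pow_lt_one hq.le hq k)
    field_simp
    ring

lemma summable_norm_qPoch_div_qPoch_mul_pow (hq : ‖q‖ < 1) (α : ℂ) {z : ℂ} (hz : ‖z‖ < 1) :
    Summable fun m : ℕ => ‖qPoch q α m / qPoch q q m * z ^ m‖ := by
  obtain ⟨C, hC⟩ := exists_norm_qPoch_le hq α
  obtain ⟨D, hD⟩ := exists_norm_inv_qPoch_le hq hq
  refine .of_nonneg_of_le (fun _ => norm_nonneg _) (fun m => ?_)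
    ((summable_geometric_of_lt_one (norm_nonneg z) hz).mul_left (C * D))
  rw [div_eq_mul_inv, norm_mul, norm_mul, norm_pow]
  gcongr
  · exact (norm_nonneg _).trans (hC 0)
  · exact hC m
  · exact hD m

theorem tsum_qPoch_pow_div_qPoch_mul_pow (hq : ‖q‖ < 1) {z : ℂ} (hz : ‖z‖ < 1) (N : ℕ) :
    ∑' m : ℕ, qPoch q (q ^ N) m / qPoch q q m * z ^ m = (qPoch q z N)⁻¹ := by
  induction N with
  | zero =>
    rw [tsum_eq_single 0 fun m hm => ?_]
    · simp
    · obtain ⟨m, rfl⟩ := Nat.exists_eq_succ_of_ne_zero hm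
      simp [qPoch_succ']
  | succ N ih =>
    have hzN := norm_mul_pow_lt_one hq.le hz N
    rw [qPoch_succ, mul_inv, ← ih, ← tsum_geometric_of_norm_lt_one hzN,
      tsum_mul_tsum_eq_tsum_sum_range_of_summable_norm
        (summable_norm_qPoch_div_qPoch_mul_pow hq _ hz)
        (by simpa using summable_geometric_of_lt_one (norm_nonneg _) hzN)]
    refine tsum_congr fun k => ?_
    rw [← sum_range_qPoch_div_qPoch_mul_pow hq N k, sum_mul]
    refine sum_congr rfl fun j hj => ?_
    rw [mul_pow, ← pow_mul_pow_sub z (Nat.lt_succ_iff.1 (mem_range.1 hj))]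
    ring

theorem tsum_qPoch_div_qPoch_mul_pow_mul_hahn (hq : ‖q‖ < 1) {a b c : ℂ}
    (hab : ‖a * b‖ < 1) (hac : ‖a * c‖ < 1) (α : ℂ) (n : ℕ) :
    ∑' k : ℕ, qPoch q (q ^ n) k / qPoch q q k * a ^ k * hahn q α b c k
      = ∑' j : ℕ, qPoch q (q ^ n) j * qPoch q α j / qPoch q q j * (a * b) ^ j
          * (qPoch q (a * c) (n + j))⁻¹ := by
  set F : ℕ × ℕ → ℂ := fun p => qPoch q (q ^ n) (p.1 + p.2) * qPoch q α p.1
    / (qPoch q q p.1 * qPoch q q p.2) * ((a * b) ^ p.1 * (a * c) ^ p.2) with hFdef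
  have hterm (k : ℕ) : qPoch q (q ^ n) k / qPoch q q k * a ^ k * hahn q α b c k
      = ∑ p ∈ antidiagonal k, F p := by
    rw [Nat.sum_antidiagonal_eq_sum_range_succ_mk, hahn, mul_sum]
    refine sum_congr rfl fun j hj => ?_
    have hjk := Nat.lt_succ_iff.1 (mem_range.1 hj)
    simp only [hFdef]
    rw [Nat.add_sub_cancel' hjk, qbinom, ← pow_mul_pow_sub a hjk]
    have := qPoch_ne_zero hq.le hq k
    have := qPoch_ne_zero hq.le hq j
    have := qPoch_ne_zero hq.le hq (k - j)
    field_simp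
    ring
  have hF : Summable F := by
    obtain ⟨C, hC⟩ := exists_norm_qPoch_le hq (q ^ n)
    obtain ⟨C', hC'⟩ := exists_norm_qPoch_le hq α
    obtain ⟨D, hD⟩ := exists_norm_inv_qPoch_le hq hq
    have hC0 : 0 ≤ C := (norm_nonneg _).trans (hC 0)
    have hC'0 : 0 ≤ C' := (norm_nonneg _).trans (hC' 0)
    have hD0 : 0 ≤ D := (norm_nonneg _).trans (hD 0)
    refine .of_norm_bounded ((Summable.mul_of_nonneg
      (summable_geometric_of_lt_one (norm_nonneg _) hab)
      (summable_geometric_of_lt_one (norm_nonneg _) hac)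
      (fun _ => by positivity) (fun _ => by positivity)).mul_left (C * C' * (D * D)))
      fun p => ?_
    obtain ⟨j, m⟩ := p
    simp only [hFdef, div_eq_mul_inv, mul_inv, norm_mul, norm_pow]
    gcongr ?_ * _
    exact mul_le_mul (mul_le_mul (hC _) (hC' _) (norm_nonneg _) hC0)
      (mul_le_mul (hD _) (hD _) (norm_nonneg _) hD0) (by positivity) (by positivity)
  have hinner (j : ℕ) : ∑' m : ℕ, F (j, m) = qPoch q (q ^ n) j * qPoch q α j / qPoch q q j
      * (a * b) ^ j * (qPoch q (a * c) (n + j))⁻¹ := by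
    rw [← tsum_qPoch_pow_div_qPoch_mul_pow hq hac (n + j), ← tsum_mul_left]
    refine tsum_congr fun m => ?_
    simp only [hFdef]
    rw [qPoch_add, ← pow_add]
    ring
  rw [tsum_congr hterm, tsum_sum_antidiagonal_eq_tsum_prod hF, hF.tsum_prod' hF.prod_factor,
    tsum_congr hinner]

end

/-- H_n(aD_q) applied to 1/((bx;q)_∞ (cx;q)_∞). -/
theorem heine_op_inv_two_qPochInf (q a b c : ℂ) (hq0 : q ≠ 0) (hq : ‖q‖ < 1)
    (hab : ‖a * b‖ < 1) (hac : ‖a * c‖ < 1) (n : ℕ) (x : ℂ) (hx : x ≠ 0)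
    (hbx : ‖b * x‖ < 1) (hcx : ‖c * x‖ < 1) :
    ∑' k : ℕ, qPoch q (q ^ n) k / qPoch q q k * a ^ k *
        ((Dq q)^[k] (fun t => 1 / (qPochInf q (b * t) * qPochInf q (c * t))) x)
      = qPochInf q (q ^ n * a * c) /
          (qPochInf q (b * x) * qPochInf q (c * x) * qPochInf q (a * c)) *
        ∑' m : ℕ, qPoch q (q ^ n) m * qPoch q (c * x) m /
            (qPoch q q m * qPoch q (q ^ n * a * c) m) * (a * b) ^ m := by
  have hsplit (j : ℕ) :
      qPoch q (a * c) (n + j) = qPoch q (a * c) n * qPoch q (q ^ n * a * c) j := by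
    rw [qPoch_add, mul_comm (a * c), mul_assoc]
  have hInf := qPoch_mul_qPochInf hq (a * c) n
  rw [mul_comm (a * c), ← mul_assoc] at hInf
  have hInf_ne := qPochInf_ne_zero hq
    (show q ^ n * a * c = a * c * q ^ n by ring ▸ norm_mul_pow_lt_one hq.le hac n)
  have hPoch_ne := qPoch_ne_zero hq.le hac n
  calc _ = (∑' k : ℕ, qPoch q (q ^ n) k / qPoch q q k * a ^ k * hahn q (c * x) b c k)
          / (qPochInf q (b * x) * qPochInf q (c * x)) := by
        rw [← tsum_div_const]
        exact tsum_congr fun k => by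
          rw [iterate_Dq_inv_qPochInf_mul hq0 hq hx hbx hcx, mul_div_assoc]
    _ = (∑' m : ℕ, qPoch q (q ^ n) m * qPoch q (c * x) m /
            (qPoch q q m * qPoch q (q ^ n * a * c) m) * (a * b) ^ m)
          * (qPoch q (a * c) n)⁻¹ / (qPochInf q (b * x) * qPochInf q (c * x)) := by
        rw [tsum_qPoch_div_qPoch_mul_pow_mul_hahn hq hab hac, ← tsum_mul_right]
        congr 1
        refine tsum_congr fun j => ?_
        rw [hsplit]
        field_simp
    _ = _ := by
        rw [← hInf]
        generalize qPochInf q (q ^ n * a * c) = Q at *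
        field_simp
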